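/- The matrix H built from the eigenvalues and eigenspace bases of a λ-QT code C is a parity-check matrix for C: a vector c ∈ F_q^{mℓ} lies in C if and only if H c^T = 0. -/

import Mathlib

/-!
A codeword is the image of a vector `w` of the `K[X]`-module `M` spanned by the rows of `G`,
and `M` contains `(X^m - λ) K[X]^ℓ`, so `c ∈ C` iff `w ∈ M`. Membership in `M` may be tested
over `F`: a `K`-linear retraction `F → K`, applied coefficientwise, takes an `F[X]`-combination
of the rows of `G` to a `K[X]`-combination. Over `F` the polynomial `X^m - λ` is separable and
splits, so by the Chinese remainder theorem `w ∈ M` iff for every root `a` the value `w(a)`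
lies in the row space of `G(a)`. That row space is all of `F^ℓ` unless `det G(a) = 0`, i.e.
`a = β_i`, and then it is the annihilator of the eigenspace `V_i`. The block of `H c^T` at
`β_i` is exactly `V_i w(β_i)`.
-/

open Polynomial Function
open scoped Matrix

namespace Matrix

variable {F : Type*} [Field F] {ι κ ν : Type*} [Fintype ι] [Fintype κ] [Fintype ν]

theorem span_row_eq_ker_mulVecLin_of_span_row_eq_ker {A : Matrix κ ι F} {W : Matrix ν ι F}
    (hW : Submodule.span F (Set.range W.row) = LinearMap.ker A.mulVecLin) :
    Submodule.span F (Set.range A.row) = LinearMap.ker W.mulVecLin := by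
  have hle : Submodule.span F (Set.range A.row) ≤ LinearMap.ker W.mulVecLin := by
    rw [Submodule.span_le]
    rintro _ ⟨k, rfl⟩
    ext r
    have hr : W r ∈ LinearMap.ker A.mulVecLin := hW ▸ Submodule.subset_span ⟨r, rfl⟩
    simpa [mulVec, row, dotProduct_comm] using congrFun hr k
  refine Submodule.eq_of_le_of_finrank_eq hle ?_
  have hA := A.mulVecLin.finrank_range_add_finrank_ker
  have hW' := W.mulVecLin.finrank_range_add_finrank_ker
  rw [← rank, rank_eq_finrank_span_row] at hA hW'
  rw [hW] at hW'
  omega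

theorem span_row_eq_top_of_det_ne_zero [DecidableEq ι] {A : Matrix ι ι F} (h : A.det ≠ 0) :
    Submodule.span F (Set.range A.row) = ⊤ := by
  refine Submodule.eq_top_of_finrank_eq ?_
  rw [← rank_eq_finrank_span_row, rank_of_isUnit _ ((isUnit_iff_isUnit_det A).mpr h.isUnit),
    Module.finrank_fintype_fun_eq_card]

end Matrix

namespace Submodule

theorem apply_mem_map_iff_of_ker_le {R M M₂ : Type*} [Ring R] [AddCommGroup M]
    [AddCommGroup M₂] [Module R M] [Module R M₂] (Φ : M →ₗ[R] M₂) {N : Submodule R M}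
    (h : LinearMap.ker Φ ≤ N) {x : M} : Φ x ∈ N.map Φ ↔ x ∈ N := by
  rw [← mem_comap, comap_map_eq, sup_eq_left.mpr h]

theorem smul_mem_of_forall_smul_single_mem {R ι : Type*} [CommSemiring R] [Fintype ι]
    [DecidableEq ι] {N : Submodule R (ι → R)} {f : R} (h : ∀ j, f • Pi.single j 1 ∈ N)
    (w : ι → R) : f • w ∈ N := by
  rw [← Finset.univ_sum_single w, Finset.smul_sum]
  refine sum_mem fun j _ => ?_
  rw [← mul_one (w j), ← smul_eq_mul, Pi.single_smul, smul_comm]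
  exact N.smul_mem _ (h j)

theorem exists_sub_eq_prod_smul {R M ι : Type*} [CommRing R] [AddCommGroup M] [Module R M]
    (N : Submodule R M) {p : ι → R} {s : Finset ι} (hp : (s : Set ι).Pairwise (IsCoprime on p))
    {v : M} (h : ∀ a ∈ s, ∃ u ∈ N, ∃ w, v - u = p a • w) :
    ∃ u ∈ N, ∃ w, v - u = (∏ a ∈ s, p a) • w := by
  classical
  induction s using Finset.induction_on with
  | empty => exact ⟨0, N.zero_mem, v, by simp⟩
  | @insert a s ha ih =>
    obtain ⟨u₁, hu₁, w₁, hw₁⟩ := ih (hp.mono (by simp))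
      fun b hb => h b (Finset.mem_insert_of_mem hb)
    obtain ⟨u₂, hu₂, w₂, hw₂⟩ := h a (Finset.mem_insert_self a s)
    obtain ⟨x, y, hxy⟩ : IsCoprime (p a) (∏ b ∈ s, p b) :=
      IsCoprime.prod_right fun b hb => hp (by simp) (by simp [hb])
        (by rintro rfl; exact ha hb)
    refine ⟨(x * p a) • u₁ + (y * ∏ b ∈ s, p b) • u₂,
      N.add_mem (N.smul_mem _ hu₁) (N.smul_mem _ hu₂), x • w₁ + y • w₂, ?_⟩
    rw [Finset.prod_insert ha]
    linear_combination (norm := module)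
      (x * p a) • hw₁ + (y * ∏ b ∈ s, p b) • hw₂ - hxy • v

end Submodule

theorem Ideal.Quotient.pi_mk_mem_map_iff {K R ι : Type*} [CommRing K] [CommRing R] [Algebra K R]
    [Fintype ι] [DecidableEq ι] {f : R} {N : Submodule R (ι → R)}
    (hf : ∀ j, f • Pi.single j 1 ∈ N) (w : ι → R) :
    (fun j => Ideal.Quotient.mk (Ideal.span {f}) (w j)) ∈ (N.restrictScalars K).map
        (LinearMap.pi fun j => (Ideal.Quotient.mkₐ K (Ideal.span {f})).toLinearMap ∘ₗ
          LinearMap.proj j) ↔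
      w ∈ N := by
  refine (Submodule.apply_mem_map_iff_of_ker_le _ fun u hu => ?_).trans
    (Submodule.restrictScalars_mem K N w)
  choose q hq using fun j => Ideal.mem_span_singleton'.mp
    (Ideal.Quotient.eq_zero_iff_mem.mp (congrFun hu j))
  have hu : u = f • q := funext fun j => by
    rw [Pi.smul_apply, smul_eq_mul, mul_comm]
    exact (hq j).symm
  exact hu ▸ Submodule.smul_mem_of_forall_smul_single_mem hf q

theorem FiniteField.natCast_ne_zero_of_coprime_card {K : Type*} [Field K] [Fintype K] {m : ℕ}
    (h : m.Coprime (Fintype.card K)) : (m : K) ≠ 0 := fun hm =>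
  CharP.ringChar_ne_one <| Nat.dvd_one.mp <|
    h ▸ Nat.dvd_gcd (ringChar.dvd hm) (ringChar.dvd (Nat.cast_card_eq_zero K))

namespace Polynomial

theorem prod_X_sub_C_roots_toFinset {F : Type*} [Field F] [DecidableEq F] {f : F[X]}
    (hmon : f.Monic) (hsep : f.Separable) (hsplit : f.Splits) :
    ∏ a ∈ f.roots.toFinset, (X - C a) = f := by
  rw [Finset.prod_eq_multiset_prod, Multiset.toFinset_val, (nodup_roots hsep).dedup,
    ← hsplit.eq_prod_roots_of_monic hmon]

section Evaluation

variable {R : Type*} [CommRing R] {ι κ : Type*} [Fintype κ]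

theorem eval_mem_span_eval_of_mem_span {g : κ → ι → R[X]} {v : ι → R[X]}
    (hv : v ∈ Submodule.span R[X] (Set.range g)) (a : R) :
    (fun j => (v j).eval a) ∈ Submodule.span R (Set.range fun i j => (g i j).eval a) := by
  obtain ⟨c, rfl⟩ := (Submodule.mem_span_range_iff_exists_fun R[X]).mp hv
  refine (Submodule.mem_span_range_iff_exists_fun R).mpr ⟨fun i => (c i).eval a, ?_⟩
  ext j
  simp [eval_finsetSum]

theorem exists_mem_span_sub_eq_smul_of_eval_mem_span {g : κ → ι → R[X]} {v : ι → R[X]}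
    {a : R}
    (h : (fun j => (v j).eval a) ∈ Submodule.span R (Set.range fun i j => (g i j).eval a)) :
    ∃ u ∈ Submodule.span R[X] (Set.range g), ∃ w, v - u = (X - C a) • w := by
  obtain ⟨c, hc⟩ := (Submodule.mem_span_range_iff_exists_fun R).mp h
  set u := ∑ i, C (c i) • g i
  refine ⟨u, Submodule.sum_mem _ fun i _ => Submodule.smul_mem _ _ (Submodule.subset_span
    ⟨i, rfl⟩), fun j => (v j - u j) /ₘ (X - C a), ?_⟩
  ext1 j
  have hroot : (v j - u j).IsRoot a := by
    have := congrFun hc j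
    simp_all [u, eval_finsetSum]
  exact (mul_divByMonic_eq_iff_isRoot.mpr hroot).symm

theorem mem_span_of_forall_roots_eval_mem_span {F : Type*} [Field F] [Fintype ι]
    [DecidableEq ι] {g : κ → ι → F[X]} {f : F[X]} (hmon : f.Monic) (hsep : f.Separable)
    (hsplit : f.Splits) (hf : ∀ j, f • Pi.single j 1 ∈ Submodule.span F[X] (Set.range g))
    {v : ι → F[X]}
    (h : ∀ a ∈ f.roots,
      (fun j => (v j).eval a) ∈ Submodule.span F (Set.range fun i j => (g i j).eval a)) :
    v ∈ Submodule.span F[X] (Set.range g) := by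
  classical
  obtain ⟨u, hu, w, hw⟩ := (Submodule.span F[X] (Set.range g)).exists_sub_eq_prod_smul
    ((pairwise_coprime_X_sub_C (s := fun a : F => a) fun _ _ h => h).set_pairwise _)
    fun a ha => exists_mem_span_sub_eq_smul_of_eval_mem_span (h a (Multiset.mem_toFinset.mp ha))
  rw [prod_X_sub_C_roots_toFinset hmon hsep hsplit] at hw
  have hvu : v - u ∈ Submodule.span F[X] (Set.range g) :=
    hw ▸ Submodule.smul_mem_of_forall_smul_single_mem hf w
  simpa using add_mem hu hvu

end Evaluation

theorem mem_span_row_iff_forall_eval_mem_span_row {F ι T : Type*} [Field F] [Fintype ι]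
    [DecidableEq ι] {G : Matrix ι ι F[X]} {f : F[X]} (hmon : f.Monic) (hsep : f.Separable)
    (hsplit : f.Splits) (hf : ∀ j, f • Pi.single j 1 ∈ Submodule.span F[X] (Set.range G.row))
    {β : T → F} (hβ : ∀ a, G.det.eval a = 0 → ∃ i, a = β i) {v : ι → F[X]} :
    v ∈ Submodule.span F[X] (Set.range G.row) ↔
      ∀ i, (fun j => (v j).eval (β i)) ∈
        Submodule.span F (Set.range (G.map (eval (β i))).row) := by
  refine ⟨fun hv i => eval_mem_span_eval_of_mem_span hv (β i), fun h => ?_⟩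
  refine mem_span_of_forall_roots_eval_mem_span hmon hsep hsplit hf fun a _ => ?_
  by_cases hdet : G.det.eval a = 0
  · obtain ⟨i, rfl⟩ := hβ a hdet
    exact h i
  · have hdet' : (G.map (eval a)).det ≠ 0 := by
      rwa [← coe_evalRingHom, ← RingHom.mapMatrix_apply, ← RingHom.map_det]
    exact Matrix.span_row_eq_top_of_det_ne_zero hdet' ▸ Submodule.mem_top

section Descent

variable {K F : Type*} [Field K] [CommRing F] [Algebra K F]

noncomputable def mapCoeffs (r : F →ₗ[K] K) : F[X] →ₗ[K] K[X] :=
  lsum fun n => monomial n ∘ₗ r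

@[simp]
theorem coeff_mapCoeffs (r : F →ₗ[K] K) (p : F[X]) (n : ℕ) :
    (mapCoeffs r p).coeff n = r (p.coeff n) := by
  simp only [mapCoeffs, lsum_apply, LinearMap.coe_comp, comp_apply, Polynomial.sum_def,
    finsetSum_coeff, coeff_monomial]
  rw [Finset.sum_ite_eq']
  split_ifs with h
  · rfl
  · rw [notMem_support_iff.mp h, map_zero]

theorem mapCoeffs_mul_map (r : F →ₗ[K] K) (p : F[X]) (q : K[X]) :
    mapCoeffs r (p * q.map (algebraMap K F)) = mapCoeffs r p * q := by
  have hr : ∀ x c, r (x * algebraMap K F c) = r x * c := fun x c => by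
    rw [mul_comm, ← Algebra.smul_def, map_smul, smul_eq_mul, mul_comm]
  ext n
  simp [coeff_mul, map_sum, hr]

theorem mapCoeffs_map {r : F →ₗ[K] K} (hr : r ∘ₗ Algebra.linearMap K F = LinearMap.id)
    (p : K[X]) : mapCoeffs r (p.map (algebraMap K F)) = p := by
  ext n
  simpa using LinearMap.congr_fun hr (p.coeff n)

theorem map_mem_span_map_iff [Nontrivial F] {ι κ : Type*} [Fintype κ] {g : κ → ι → K[X]}
    {w : ι → K[X]} :
    (fun j => (w j).map (algebraMap K F)) ∈
        Submodule.span F[X] (Set.range fun i j => (g i j).map (algebraMap K F)) ↔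
      w ∈ Submodule.span K[X] (Set.range g) := by
  simp only [Submodule.mem_span_range_iff_exists_fun, funext_iff, Finset.sum_apply,
    Pi.smul_apply, smul_eq_mul]
  constructor
  · rintro ⟨a, ha⟩
    obtain ⟨r, hr⟩ := (Algebra.linearMap K F).exists_leftInverse_of_injective
      (LinearMap.ker_eq_bot.mpr (algebraMap K F).injective)
    refine ⟨fun i => mapCoeffs r (a i), fun j => ?_⟩
    rw [← mapCoeffs_map hr (w j), ← ha j, map_sum]
    simp only [mapCoeffs_mul_map]
  · rintro ⟨a, ha⟩
    exact ⟨fun i => (a i).map (algebraMap K F), fun j => by simp [← ha, Polynomial.map_sum]⟩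

end Descent

theorem mem_span_row_iff_forall_aeval_mem_span_row {K F ι T : Type*} [Field K] [Field F]
    [Algebra K F] [Fintype ι] [DecidableEq ι] {G : Matrix ι ι K[X]} {f : K[X]}
    (hmon : f.Monic) (hsep : f.Separable) (hsplit : (f.map (algebraMap K F)).Splits)
    (hf : ∀ j, f • Pi.single j 1 ∈ Submodule.span K[X] (Set.range G.row))
    {β : T → F} (hβ : ∀ a, aeval a G.det = 0 → ∃ i, a = β i) {w : ι → K[X]} :
    w ∈ Submodule.span K[X] (Set.range G.row) ↔
      ∀ i, (fun j => aeval (β i) (w j)) ∈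
        Submodule.span F (Set.range (G.map (aeval (β i))).row) := by
  set φ := algebraMap K F
  have hfF : ∀ j, f.map φ • Pi.single j 1 ∈
      Submodule.span F[X] (Set.range (G.map (map φ)).row) := fun j => by
    have hmap : (fun j' => ((f • Pi.single j 1 : ι → K[X]) j').map φ) =
        f.map φ • Pi.single j 1 := by
      ext1 j'
      by_cases h : j' = j
      · subst h; simp
      · simp [h]
    exact hmap ▸ map_mem_span_map_iff.mpr (hf j)
  have hβF : ∀ a, (G.map (map φ)).det.eval a = 0 → ∃ i, a = β i := fun a ha => hβ a <| by
    rwa [← coe_mapRingHom, ← RingHom.mapMatrix_apply, ← RingHom.map_det, coe_mapRingHom,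
      eval_map_algebraMap] at ha
  have hcomp : ∀ a : F, eval a ∘ map φ = aeval a := fun a =>
    _root_.funext fun p => eval_map_algebraMap p a
  rw [← map_mem_span_map_iff (F := F)]
  refine (mem_span_row_iff_forall_eval_mem_span_row (hmon.map φ) hsep.map hsplit hfF hβF).trans ?_
  simp [Matrix.map_map, hcomp, eval_map_algebraMap]

end Polynomial

def spectralMatrix {K : Type*} [Monoid K] (m : ℕ) {ι T : Type*} {ρ : T → Type*} (β : T → K)
    (V : (i : T) → Matrix (ρ i) ι K) : Matrix (Σ i, ρ i) (Fin m × ι) K :=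
  Matrix.of fun p q => β p.1 ^ (q.1 : ℕ) * V p.1 p.2 q.2

theorem spectralMatrix_mulVec_eq_zero_iff {K F : Type*} [CommSemiring K] [CommSemiring F]
    [Algebra K F] {m : ℕ} {ι T : Type*} [Fintype ι] {ρ : T → Type*} [∀ i, Fintype (ρ i)]
    (β : T → F) (V : (i : T) → Matrix (ρ i) ι F) (c : Fin m → ι → K) :
    spectralMatrix m β V *ᵥ (fun q => algebraMap K F (c q.1 q.2)) = 0 ↔
      ∀ i, V i *ᵥ (fun j => aeval (β i) (∑ k : Fin m, C (c k j) * X ^ (k : ℕ))) = 0 := by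
  have hentry : ∀ i r,
      (spectralMatrix m β V *ᵥ fun q => algebraMap K F (c q.1 q.2)) ⟨i, r⟩ =
        (V i *ᵥ fun j => aeval (β i) (∑ k : Fin m, C (c k j) * X ^ (k : ℕ))) r := by
    intro i r
    simp only [Matrix.mulVec, dotProduct, spectralMatrix, Matrix.of_apply,
      Fintype.sum_prod_type, map_sum, map_mul, aeval_C, map_pow, aeval_X, Finset.mul_sum]
    rw [Finset.sum_comm]
    exact Finset.sum_congr rfl fun j _ => Finset.sum_congr rfl fun k _ => by ring
  simp only [funext_iff, Sigma.forall, hentry, Pi.zero_apply]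

theorem spectral_parity_check_matrix_general
    (K : Type*) [Field K] [Fintype K] (m ℓ : ℕ) (hm : 0 < m)
    (hgcd : Nat.gcd m (Fintype.card K) = 1) (lam : K) (hlam : lam ≠ 0)
    (F : Type*) [Field F] [Algebra K F]
    (hsplit : Polynomial.Splits (((X : Polynomial K) ^ m - C lam).map (algebraMap K F)))
    (I : Ideal (Polynomial K)) (hI : I = Ideal.span {(X : Polynomial K) ^ m - C lam})
    (G : Matrix (Fin ℓ) (Fin ℓ) (Polynomial K))
    (M : Submodule (Polynomial K) (Fin ℓ → Polynomial K))
    (hM : M = Submodule.span (Polynomial K) (Set.range (fun i : Fin ℓ => G i)))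
    (hMe : ∀ j : Fin ℓ,
      (((X : Polynomial K) ^ m - C lam) • (Pi.single j 1 : Fin ℓ → Polynomial K)) ∈ M)
    (Φ : (Fin ℓ → Polynomial K) →ₗ[K] (Fin ℓ → Polynomial K ⧸ I))
    (hΦ : Φ = LinearMap.pi (fun j : Fin ℓ =>
      (Ideal.Quotient.mkₐ K I).toLinearMap.comp
        (LinearMap.proj j : (Fin ℓ → Polynomial K) →ₗ[K] Polynomial K)))
    (Code : Submodule K (Fin ℓ → Polynomial K ⧸ I))
    (hCode : Code = Submodule.map Φ (M.restrictScalars K))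
    -- the eigenvalues β_1, …, β_t and their eigenspaces
    (t : ℕ) (β : Fin t → F)
    (hβall : ∀ x : F, Polynomial.aeval x G.det = 0 → ∃ i : Fin t, x = β i)
    (n : Fin t → ℕ) (V : (i : Fin t) → Matrix (Fin (n i)) (Fin ℓ) F)
    (hVspan : ∀ i : Fin t, Submodule.span F (Set.range (fun r : Fin (n i) => V i r))
      = LinearMap.ker (Matrix.toLin' (G.map (fun p => Polynomial.aeval (β i) p))))
    (H : Matrix ((i : Fin t) × Fin (n i)) (Fin m × Fin ℓ) F)
    (hH : H = fun p q => β p.1 ^ (q.1 : ℕ) * V p.1 p.2 q.2)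
    (c : Fin m → Fin ℓ → K) :
    (fun j : Fin ℓ => Ideal.Quotient.mk I (∑ k : Fin m, C (c k j) * X ^ (k : ℕ))) ∈ Code
      ↔ H.mulVec (fun q : Fin m × Fin ℓ => algebraMap K F (c q.1 q.2)) = 0 := by
  subst hI hΦ hCode hM
  rw [Ideal.Quotient.pi_mk_mem_map_iff hMe]
  refine (mem_span_row_iff_forall_aeval_mem_span_row (monic_X_pow_sub_C lam hm.ne')
    (separable_X_pow_sub_C lam (FiniteField.natCast_ne_zero_of_coprime_card hgcd) hlam)
    hsplit hMe hβall).trans ?_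
  rw [show H = spectralMatrix m β V from hH, spectralMatrix_mulVec_eq_zero_iff]
  refine forall_congr' fun i => ?_
  have hVi : Submodule.span F (Set.range (V i).row) =
      LinearMap.ker (G.map (aeval (β i))).mulVecLin := by
    rw [← Matrix.toLin'_apply']; exact hVspan i
  rw [Matrix.span_row_eq_ker_mulVecLin_of_span_row_eq_ker hVi]
  rfl

/-- (Spectral parity-check matrix.) The matrix `H` built from the eigenvalues and
eigenspace bases of a λ-QT code `C` is a parity-check matrix for `C`: a vector
`c ∈ K^{mℓ}`, viewed as an `m×ℓ` array, lies in `C` if and only if `H c^T = 0`. -/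
theorem spectral_parity_check_matrix
    (K : Type*) [Field K] [Fintype K] (m ℓ : ℕ) (hm : 0 < m) (hℓ : 0 < ℓ)
    (hgcd : Nat.gcd m (Fintype.card K) = 1) (lam : K) (hlam : lam ≠ 0)
    (F : Type*) [Field F] [Algebra K F]
    (hsplit : Polynomial.Splits (((X : Polynomial K) ^ m - C lam).map (algebraMap K F)))
    (I : Ideal (Polynomial K)) (hI : I = Ideal.span {(X : Polynomial K) ^ m - C lam})
    (G : Matrix (Fin ℓ) (Fin ℓ) (Polynomial K))
    (hupper : ∀ i j : Fin ℓ, j < i → G i j = 0)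
    (hdiv : ∀ j : Fin ℓ, G j j ∣ (X : Polynomial K) ^ m - C lam)
    (hdeg : ∀ i j : Fin ℓ, i < j → (G i j).degree < (G j j).degree)
    (hfull : ∀ i j : Fin ℓ, i ≠ j → G j j = (X : Polynomial K) ^ m - C lam → G i j = 0)
    (M : Submodule (Polynomial K) (Fin ℓ → Polynomial K))
    (hM : M = Submodule.span (Polynomial K) (Set.range (fun i : Fin ℓ => G i)))
    (hMe : ∀ j : Fin ℓ,
      (((X : Polynomial K) ^ m - C lam) • (Pi.single j 1 : Fin ℓ → Polynomial K)) ∈ M)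
    (Φ : (Fin ℓ → Polynomial K) →ₗ[K] (Fin ℓ → Polynomial K ⧸ I))
    (hΦ : Φ = LinearMap.pi (fun j : Fin ℓ =>
      (Ideal.Quotient.mkₐ K I).toLinearMap.comp
        (LinearMap.proj j : (Fin ℓ → Polynomial K) →ₗ[K] Polynomial K)))
    (Code : Submodule K (Fin ℓ → Polynomial K ⧸ I))
    (hCode : Code = Submodule.map Φ (M.restrictScalars K))
    -- the eigenvalues β_1, …, β_t and their eigenspaces
    (t : ℕ) (β : Fin t → F) (hβinj : Function.Injective β)
    (hβroot : ∀ i : Fin t, Polynomial.aeval (β i) G.det = 0)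
    (hβall : ∀ x : F, Polynomial.aeval x G.det = 0 → ∃ i : Fin t, x = β i)
    (n : Fin t → ℕ) (V : (i : Fin t) → Matrix (Fin (n i)) (Fin ℓ) F)
    (hVli : ∀ i : Fin t, LinearIndependent F (fun r : Fin (n i) => V i r))
    (hVspan : ∀ i : Fin t, Submodule.span F (Set.range (fun r : Fin (n i) => V i r))
      = LinearMap.ker (Matrix.toLin' (G.map (fun p => Polynomial.aeval (β i) p))))
    (H : Matrix ((i : Fin t) × Fin (n i)) (Fin m × Fin ℓ) F)
    (hH : H = fun p q => β p.1 ^ (q.1 : ℕ) * V p.1 p.2 q.2)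
    (c : Fin m → Fin ℓ → K) :
    (fun j : Fin ℓ => Ideal.Quotient.mk I (∑ k : Fin m, C (c k j) * X ^ (k : ℕ))) ∈ Code
      ↔ H.mulVec (fun q : Fin m × Fin ℓ => algebraMap K F (c q.1 q.2)) = 0 :=
  spectral_parity_check_matrix_general K m ℓ hm hgcd lam hlam F hsplit I hI G M hM hMe Φ hΦ Code
    hCode t β hβall n V hVspan H hH c
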